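/- arXiv:2005.14632 — 3 statements merged into one kernel-verified Lean document; each statement's English description precedes it below -/
import Mathlib

section
/- Fix ε > 0. For every θ ∈ (-π, π], the set {σ ∈ (1, 1 + ε) : Arg(ζ_{π/2}(σ)) = θ} is infinite; in other words, the curve traced by ζ_{π/2}(σ) for σ ∈ (1, 1 + ε) attains every prescribed principal argument infinitely many times. -/
open Real

/-- `ζ_{π/2}(σ) = ∏_{p prime} (1 - i·p^{-σ})⁻¹` for real `σ > 1`. -/
noncomputable def zetaPiHalf (σ : ℝ) : ℂ :=
  ∏' p : Nat.Primes, (1 - Complex.I * (p : ℂ) ^ (-σ : ℂ))⁻¹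

/-!
Each Euler factor `(1 - i x)⁻¹` with `x = p^{-σ} > 0` has argument `arctan x`, and the logarithms
of the factors are summable, so `ζ_{π/2}(σ) = exp (∑ log (1 - i p^{-σ})⁻¹)` and its argument is
`G(σ) = ∑_p arctan p^{-σ}` reduced modulo `2π` into `(-π, π]`. The function `G` is continuous on
`(1, ∞)` and tends to `+∞` as `σ → 1⁺`, because `arctan p⁻¹ ≥ p⁻¹ / 2` and `∑ 1/p` diverges.
By the intermediate value theorem `G` takes on `(1, 1 + ε)` every large value, in particular
each of the infinitely many values `θ + 2πn`, and there `Arg ζ_{π/2}(σ) = θ`.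
-/

open Set Filter Topology

lemma Real.arctan_le_self {t : ℝ} (ht : 0 ≤ t) : arctan t ≤ t :=
  calc arctan t ≤ tan (arctan t) := le_tan (arctan_nonneg.mpr ht) (arctan_lt_pi_div_two t)
    _ = t := tan_arctan t

lemma Real.half_le_arctan {t : ℝ} (h₀ : 0 ≤ t) (h₁ : t ≤ 1) : t / 2 ≤ arctan t := by
  have hsqrt : √(1 + t ^ 2) ≤ 2 := by
    rw [sqrt_le_left (by norm_num)]
    nlinarith
  calc t / 2 ≤ t / √(1 + t ^ 2) := div_le_div_of_nonneg_left h₀ (by positivity) hsqrt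
    _ = sin (arctan t) := (sin_arctan t).symm
    _ ≤ arctan t := sin_le (arctan_nonneg.mpr h₀)

lemma Complex.arg_one_add_mul_I (t : ℝ) : arg (1 + t * I) = Real.arctan t := by
  rw [arg_of_re_nonneg (by simp), ← ofReal_one, norm_add_mul_I, one_pow,
    Real.arctan_eq_arcsin]
  simp

lemma Complex.arg_one_sub_I_mul (t : ℝ) : arg (1 - I * t) = -Real.arctan t := by
  rw [← Real.arctan_neg, ← arg_one_add_mul_I]
  push_cast
  ring_nf

lemma Complex.log_inv_one_sub_I_mul (t : ℝ) : log (1 - I * t)⁻¹ = -log (1 - I * t) := by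
  refine log_inv _ ?_
  rw [arg_one_sub_I_mul]
  linarith [Real.neg_pi_div_two_lt_arctan t, pi_pos]

lemma Complex.im_log_inv_one_sub_I_mul (t : ℝ) : (log (1 - I * t)⁻¹).im = Real.arctan t := by
  rw [log_inv_one_sub_I_mul, neg_im, log_im, arg_one_sub_I_mul, neg_neg]

lemma Complex.summable_log_inv_one_sub_I_mul {ι : Type*} {x : ι → ℝ} (hx : Summable x) :
    Summable fun i => log (1 - I * x i)⁻¹ := by
  have hs : Summable fun i => -(I * x i) := ((summable_ofReal.mpr hx).mul_left I).neg
  refine (summable_log_one_add_of_summable hs).neg.congr fun i => ?_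
  rw [log_inv_one_sub_I_mul, ← sub_eq_add_neg]

lemma Complex.arg_tprod_inv_one_sub_I_mul {ι : Type*} {x : ι → ℝ} (hx : Summable x) :
    arg (∏' i, (1 - I * x i)⁻¹) =
      toIocMod Real.two_pi_pos (-π) (∑' i, Real.arctan (x i)) := by
  have hlog := summable_log_inv_one_sub_I_mul hx
  have hne : ∀ i, (1 - I * x i)⁻¹ ≠ 0 := fun i => inv_ne_zero fun h => by
    simpa using congrArg re h
  rw [← cexp_tsum_eq_tprod hne hlog, arg_exp, im_tsum hlog]
  simp_rw [im_log_inv_one_sub_I_mul]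

lemma infinite_Ici_inter_toIocMod_preimage {α : Type*} [AddCommGroup α] [LinearOrder α]
    [IsOrderedAddMonoid α] [Archimedean α] {p : α} (hp : 0 < p) {a θ : α}
    (hθ : θ ∈ Ioc a (a + p)) (c : α) : (Ici c ∩ toIocMod hp a ⁻¹' {θ}).Infinite := by
  refine infinite_of_not_bddAbove fun ⟨M, hM⟩ => ?_
  obtain ⟨n, hn⟩ := exists_lt_nsmul hp (max M c - θ)
  rw [sub_lt_iff_lt_add'] at hn
  have hmem : θ + n • p ∈ Ici c ∩ toIocMod hp a ⁻¹' {θ} :=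
    ⟨(le_max_right M c).trans hn.le,
      by simp [toIocMod_add_nsmul, (toIocMod_eq_self hp).mpr hθ]⟩
  exact (hM hmem).not_gt ((le_max_left M c).trans_lt hn)

lemma Ici_subset_image_Ioc_of_tendsto_atTop {f : ℝ → ℝ} {a b : ℝ} (hab : a < b)
    (hf : ContinuousOn f (Ioc a b)) (hlim : Tendsto f (𝓝[>] a) atTop) :
    Ici (f b) ⊆ f '' Ioc a b := by
  intro y hy
  obtain ⟨c, hyc, hac, hcb⟩ := ((hlim.eventually_ge_atTop y).and (Ioo_mem_nhdsGT hab)).exists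
  have hsub : Icc c b ⊆ Ioc a b := (Icc_subset_Ioc_iff hcb.le).mpr ⟨hac, le_rfl⟩
  obtain ⟨σ, hσ, rfl⟩ := intermediate_value_Icc' hcb.le (hf.mono hsub) ⟨hy, hyc⟩
  exact ⟨σ, hsub hσ, rfl⟩

lemma tendsto_tsum_atTop_of_not_summable {ι : Type*} {f : ι → ℝ → ℝ} {a : ℝ} {l : Filter ℝ}
    (hl : l ≤ 𝓝 a) (hcont : ∀ i, ContinuousAt (f i) a) (hnonneg : ∀ i x, 0 ≤ f i x)
    (hsum : ∀ᶠ x in l, Summable fun i => f i x) (hdiv : ¬Summable fun i => f i a) :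
    Tendsto (fun x => ∑' i, f i x) l atTop := by
  refine tendsto_atTop.mpr fun M => ?_
  obtain ⟨F, hF⟩ : ∃ F : Finset ι, M < ∑ i ∈ F, f i a := by
    by_contra! h
    exact hdiv (summable_of_sum_le (fun i => hnonneg i a) h)
  have hF' : ∀ᶠ x in l, M < ∑ i ∈ F, f i x :=
    hl ((tendsto_finsetSum F fun i _ => hcont i).eventually (lt_mem_nhds hF))
  filter_upwards [hF', hsum] with x hx hx'
  exact hx.le.trans (hx'.sum_le_tsum F fun i _ => hnonneg i x)

lemma Nat.Primes.not_summable_arctan_inv :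
    ¬Summable fun p : Nat.Primes => arctan (p : ℝ)⁻¹ := by
  intro h
  refine Nat.Primes.not_summable_one_div
    ((h.mul_left 2).of_nonneg_of_le (fun p => by positivity) fun p => ?_)
  have hp : (1 : ℝ) ≤ p := by exact_mod_cast p.2.one_le
  have := half_le_arctan (by positivity) (inv_le_one_of_one_le₀ hp)
  rw [one_div]
  linarith

lemma Nat.Primes.summable_rpow_neg {σ : ℝ} (hσ : 1 < σ) :
    Summable fun p : Nat.Primes => (p : ℝ) ^ (-σ) :=
  Nat.Primes.summable_rpow.mpr (by linarith)

lemma continuous_arctan_prime_rpow_neg (p : Nat.Primes) :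
    Continuous fun σ : ℝ => arctan ((p : ℝ) ^ (-σ)) := by
  have : (p : ℝ) ≠ 0 := by exact_mod_cast p.2.ne_zero
  fun_prop (disch := assumption)

noncomputable def primeArctanSum (σ : ℝ) : ℝ := ∑' p : Nat.Primes, arctan ((p : ℝ) ^ (-σ))

lemma zetaPiHalf_eq_tprod (σ : ℝ) :
    zetaPiHalf σ = ∏' p : Nat.Primes, (1 - Complex.I * ((p : ℝ) ^ (-σ) : ℝ))⁻¹ := by
  unfold zetaPiHalf
  congr! 4 with p
  rw [Complex.ofReal_cpow (by positivity)]
  norm_cast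

lemma arg_zetaPiHalf {σ : ℝ} (hσ : 1 < σ) :
    (zetaPiHalf σ).arg = toIocMod two_pi_pos (-π) (primeArctanSum σ) := by
  rw [zetaPiHalf_eq_tprod, Complex.arg_tprod_inv_one_sub_I_mul (Nat.Primes.summable_rpow_neg hσ),
    primeArctanSum]

lemma continuousOn_primeArctanSum_Ici {a : ℝ} (ha : 1 < a) :
    ContinuousOn primeArctanSum (Ici a) := by
  refine continuousOn_tsum (fun p => (continuous_arctan_prime_rpow_neg p).continuousOn)
    (Nat.Primes.summable_rpow_neg ha) fun p τ hτ => ?_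
  have hp : (1 : ℝ) ≤ p := by exact_mod_cast p.2.one_le
  rw [norm_of_nonneg (arctan_nonneg.mpr (by positivity))]
  exact (arctan_le_self (by positivity)).trans
    (rpow_le_rpow_of_exponent_le hp (neg_le_neg hτ))

lemma continuousOn_primeArctanSum : ContinuousOn primeArctanSum (Ioi 1) := by
  rintro σ (hσ : 1 < σ)
  have hmid : 1 < (1 + σ) / 2 := by linarith
  exact ((continuousOn_primeArctanSum_Ici hmid).continuousAt
    (Ici_mem_nhds (by linarith))).continuousWithinAt

lemma tendsto_primeArctanSum_nhdsGT_one : Tendsto primeArctanSum (𝓝[>] 1) atTop := by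
  have hnonneg (p : Nat.Primes) (σ : ℝ) : 0 ≤ arctan ((p : ℝ) ^ (-σ)) :=
    arctan_nonneg.mpr (by positivity)
  refine tendsto_tsum_atTop_of_not_summable nhdsWithin_le_nhds
    (fun p => (continuous_arctan_prime_rpow_neg p).continuousAt) hnonneg ?_ ?_
  · filter_upwards [self_mem_nhdsWithin] with σ hσ
    exact (Nat.Primes.summable_rpow_neg hσ).of_nonneg_of_le (hnonneg · σ)
      fun p => arctan_le_self (by positivity)
  · simpa only [rpow_neg_one] using Nat.Primes.not_summable_arctan_inv

/-- Fix `ε > 0`. For every `θ ∈ (-π, π]`, the set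
`{σ ∈ (1, 1+ε) : Arg(ζ_{π/2}(σ)) = θ}` is infinite. -/
theorem zetaPiHalf_arg_eq_infinitely_often
    (ε : ℝ) (hε : 0 < ε) (θ : ℝ) (hθ : θ ∈ Set.Ioc (-π) π) :
    {σ : ℝ | σ ∈ Set.Ioo 1 (1 + ε) ∧ (zetaPiHalf σ).arg = θ}.Infinite := by
  obtain ⟨b, hb1, hbε⟩ : ∃ b, 1 < b ∧ b < 1 + ε := ⟨1 + ε / 2, by linarith, by linarith⟩
  have hsurj := Ici_subset_image_Ioc_of_tendsto_atTop hb1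
    (continuousOn_primeArctanSum.mono Ioc_subset_Ioi_self) tendsto_primeArctanSum_nhdsGT_one
  have hθ' : θ ∈ Ioc (-π) (-π + 2 * π) := by convert hθ using 2; ring
  refine Infinite.of_image primeArctanSum
    ((infinite_Ici_inter_toIocMod_preimage two_pi_pos hθ' (primeArctanSum b)).mono ?_)
  rintro y ⟨hy, hyθ⟩
  obtain ⟨σ, hσ, rfl⟩ := hsurj hy
  exact ⟨σ, ⟨⟨hσ.1, hσ.2.trans_lt hbε⟩, by rw [arg_zetaPiHalf hσ.1, hyθ]⟩, rfl⟩
end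

section
/- Fix ε > 0. There exists a continuous function φ : (1, 1 + ε) → ℝ such that ζ_{π/2}(σ) = |ζ_{π/2}(σ)|·e^{iφ(σ)} for all σ ∈ (1, 1 + ε), and φ(σ) → +∞ as σ → 1 from the right; that is, the curve σ ↦ ζ_{π/2}(σ) makes infinitely many turns around the origin as σ decreases to 1. -/
open Filter

/-!
The Euler product has the logarithm `L(σ) = ∑_p log (1 - i p^{-σ})⁻¹`, a series of continuous
functions dominated by `2 p^{-σ}`, so `L` is continuous on `σ > 1` and `φ = Im L` is a
continuous argument of `ζ_{π/2}`. Since `log (1 - z)⁻¹ = z + O(|z|²)`, the `p`-th term has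
imaginary part at least `p^{-σ} - p^{-2σ}`, hence `φ(σ) ≥ ∑_p p^{-σ} - ∑_p p^{-2}`, which tends
to `+∞` as `σ → 1⁺` because `∑_p 1/p` diverges.
-/

open Topology Complex

theorem tendsto_tsum_nhdsWithin_atTop_of_not_summable {ι X : Type*} [TopologicalSpace X]
    {f : ι → X → ℝ} {s : Set X} {a : X} (hf : ∀ i, ContinuousAt (f i) a)
    (hf_nonneg : ∀ i x, 0 ≤ f i x) (hs : ∀ x ∈ s, Summable fun i => f i x)
    (ha : ¬ Summable fun i => f i a) :
    Tendsto (fun x => ∑' i, f i x) (𝓝[s] a) atTop := by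
  rw [tendsto_atTop]
  intro M
  obtain ⟨F, hF⟩ : ∃ F : Finset ι, M < ∑ i ∈ F, f i a := by
    by_contra! h
    exact ha (summable_of_sum_le (fun i => hf_nonneg i a) h)
  have hF_cont : ContinuousAt (fun x => ∑ i ∈ F, f i x) a :=
    tendsto_finsetSum F fun i _ => hf i
  filter_upwards [nhdsWithin_le_nhds (hF_cont.eventually (eventually_ge_nhds hF)),
    self_mem_nhdsWithin] with x hx hxs
  exact hx.trans (Summable.sum_le_tsum F (fun i _ => hf_nonneg i x) (hs x hxs))

theorem Nat.Primes.tendsto_tsum_rpow_neg_nhdsGT_one :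
    Tendsto (fun σ : ℝ => ∑' p : Nat.Primes, (p : ℝ) ^ (-σ)) (𝓝[>] 1) atTop := by
  refine tendsto_tsum_nhdsWithin_atTop_of_not_summable (fun p => ?_) (fun p σ => by positivity)
    (fun σ hσ => Nat.Primes.summable_rpow.mpr (neg_lt_neg hσ))
    (Nat.Primes.summable_rpow.not.mpr (lt_irrefl _))
  exact (Real.continuousAt_const_rpow (by exact_mod_cast p.2.ne_zero)).comp
    continuous_neg.continuousAt

theorem Nat.Primes.rpow_neg_le_half {σ : ℝ} (hσ : 1 ≤ σ) (p : Nat.Primes) :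
    (p : ℝ) ^ (-σ) ≤ 1 / 2 := by
  have hp : (2 : ℝ) ≤ p := by exact_mod_cast p.2.two_le
  calc (p : ℝ) ^ (-σ) ≤ (p : ℝ) ^ (-1 : ℝ) :=
        Real.rpow_le_rpow_of_exponent_le (by linarith) (neg_le_neg hσ)
    _ ≤ 1 / 2 := by rw [Real.rpow_neg_one, one_div]; exact inv_anti₀ two_pos hp

theorem Complex.exp_eq_norm_mul_exp_im_mul_I (w : ℂ) :
    exp w = ‖exp w‖ * exp (w.im * I) := by
  rw [norm_exp, ofReal_exp, ← exp_add]
  conv_lhs => rw [← re_add_im w]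

theorem Complex.norm_log_one_sub_inv_sub_self_le_sq {z : ℂ} (hz : ‖z‖ ≤ 1 / 2) :
    ‖log (1 - z)⁻¹ - z‖ ≤ ‖z‖ ^ 2 := by
  have h_inv : (1 - ‖z‖)⁻¹ ≤ 2 := by
    rw [inv_le_comm₀ (by linarith) two_pos]
    linarith
  calc ‖log (1 - z)⁻¹ - z‖ ≤ ‖z‖ ^ 2 * (1 - ‖z‖)⁻¹ / 2 :=
        norm_log_one_sub_inv_sub_self_le (hz.trans_lt one_half_lt_one)
    _ ≤ ‖z‖ ^ 2 * 2 / 2 := by gcongr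
    _ = ‖z‖ ^ 2 := by ring

theorem Complex.norm_log_one_sub_inv_le {z : ℂ} (hz : ‖z‖ ≤ 1 / 2) :
    ‖log (1 - z)⁻¹‖ ≤ 2 * ‖z‖ := by
  calc ‖log (1 - z)⁻¹‖ ≤ ‖log (1 - z)⁻¹ - z‖ + ‖z‖ := norm_le_norm_sub_add _ _
    _ ≤ ‖z‖ ^ 2 + ‖z‖ := by gcongr; exact norm_log_one_sub_inv_sub_self_le_sq hz
    _ ≤ 2 * ‖z‖ := by nlinarith [norm_nonneg z]

theorem Complex.sub_sq_le_im_log_one_sub_I_mul_inv {t : ℝ} (ht : |t| ≤ 1 / 2) :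
    t - t ^ 2 ≤ (log (1 - I * t)⁻¹).im := by
  have h_norm : ‖I * t‖ = |t| := by simp
  have h_err := norm_log_one_sub_inv_sub_self_le_sq (h_norm ▸ ht)
  rw [h_norm, sq_abs] at h_err
  have h_im : (log (1 - I * t)⁻¹ - I * t).im = (log (1 - I * t)⁻¹).im - t := by simp
  have := (abs_le.mp ((abs_im_le_norm _).trans h_err)).1
  linarith

theorem Complex.continuous_log_one_sub_I_mul_inv :
    Continuous fun t : ℝ => log (1 - I * t)⁻¹ := by
  rw [continuous_iff_continuousAt]
  intro t
  have h_ne : 1 - I * t ≠ 0 := fun h => by simpa using congrArg re h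
  refine ContinuousAt.clog ((by fun_prop : Continuous fun t : ℝ => 1 - I * t).continuousAt.inv₀
    h_ne) (Or.inl ?_)
  have := normSq_pos.mpr h_ne
  simp only [inv_re, sub_re, one_re, mul_re, I_re, I_im, ofReal_re, ofReal_im, zero_mul,
    one_mul, sub_zero]
  positivity

namespace ZetaPiHalf

noncomputable def eulerLog (σ : ℝ) (p : Nat.Primes) : ℂ :=
  log (1 - I * ((p : ℝ) ^ (-σ) : ℝ))⁻¹

noncomputable def logZeta (σ : ℝ) : ℂ := ∑' p, eulerLog σ p

theorem norm_eulerLog_le {σ : ℝ} (hσ : 1 ≤ σ) (p : Nat.Primes) :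
    ‖eulerLog σ p‖ ≤ 2 * (p : ℝ) ^ (-σ) := by
  have h_norm : ‖I * (((p : ℝ) ^ (-σ) : ℝ) : ℂ)‖ = (p : ℝ) ^ (-σ) := by
    rw [norm_mul, norm_I, one_mul, norm_real, Real.norm_of_nonneg (by positivity)]
  have := norm_log_one_sub_inv_le (h_norm ▸ Nat.Primes.rpow_neg_le_half hσ p)
  rwa [h_norm] at this

theorem summable_eulerLog {σ : ℝ} (hσ : 1 < σ) : Summable (eulerLog σ) :=
  Summable.of_norm <| ((Nat.Primes.summable_rpow.mpr (neg_lt_neg hσ)).mul_left 2)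
    |>.of_nonneg_of_le (fun _ => norm_nonneg _) (norm_eulerLog_le hσ.le)

theorem exp_logZeta {σ : ℝ} (hσ : 1 < σ) : exp (logZeta σ) = zetaPiHalf σ := by
  have h_cpow (p : Nat.Primes) : (p : ℂ) ^ (-σ : ℂ) = (((p : ℝ) ^ (-σ) : ℝ) : ℂ) := by
    rw [ofReal_cpow (Nat.cast_nonneg _)]
    norm_cast
  simp only [zetaPiHalf, h_cpow]
  refine cexp_tsum_eq_tprod (fun p => inv_ne_zero fun h => ?_) (summable_eulerLog hσ)
  simpa using congrArg re h

theorem continuousOn_logZeta : ContinuousOn logZeta (Set.Ioi 1) := by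
  intro σ₀ hσ₀
  -- the domination by `2 p^{-a}` is uniform only on `σ > a`, for each `a > 1`
  obtain ⟨a, ha, haσ₀⟩ := exists_between (Set.mem_Ioi.mp hσ₀)
  have h_cont : ContinuousOn logZeta (Set.Ioi a) := by
    refine continuousOn_tsum (fun p => ?_)
      ((Nat.Primes.summable_rpow.mpr (neg_lt_neg ha)).mul_left 2)
      fun p σ hσ => (norm_eulerLog_le (ha.trans hσ).le p).trans ?_
    · refine (continuous_log_one_sub_I_mul_inv.comp ?_).continuousOn
      exact (Real.continuous_const_rpow (by exact_mod_cast p.2.ne_zero)).comp continuous_neg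
    · gcongr
      · exact_mod_cast p.2.one_lt.le
      · exact hσ.le
  exact (h_cont.continuousAt (Ioi_mem_nhds haσ₀)).continuousWithinAt

theorem tsum_rpow_neg_sub_le_im_logZeta {σ : ℝ} (hσ : 1 < σ) :
    ∑' p : Nat.Primes, (p : ℝ) ^ (-σ) - ∑' p : Nat.Primes, (p : ℝ) ^ (-2 : ℝ) ≤
      (logZeta σ).im := by
  have h_sum : Summable fun p : Nat.Primes => (p : ℝ) ^ (-σ) :=
    Nat.Primes.summable_rpow.mpr (neg_lt_neg hσ)
  have h_sq (p : Nat.Primes) : ((p : ℝ) ^ (-σ)) ^ 2 ≤ (p : ℝ) ^ (-2 : ℝ) := by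
    rw [← Real.rpow_natCast, ← Real.rpow_mul (Nat.cast_nonneg _)]
    exact Real.rpow_le_rpow_of_exponent_le (by exact_mod_cast p.2.one_lt.le)
      (by push_cast; linarith)
  have h_sum_sq : Summable fun p : Nat.Primes => (p : ℝ) ^ (-2 : ℝ) :=
    Nat.Primes.summable_rpow.mpr (by norm_num)
  have h_term (p : Nat.Primes) : (p : ℝ) ^ (-σ) - (p : ℝ) ^ (-2 : ℝ) ≤ (eulerLog σ p).im :=
    (sub_le_sub_left (h_sq p) _).trans <| sub_sq_le_im_log_one_sub_I_mul_inv <| by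
      rw [abs_of_nonneg (by positivity)]; exact Nat.Primes.rpow_neg_le_half hσ.le p
  rw [logZeta, im_tsum (summable_eulerLog hσ), ← h_sum.tsum_sub h_sum_sq]
  exact Summable.tsum_le_tsum h_term (h_sum.sub h_sum_sq)
    ⟨_, hasSum_im (summable_eulerLog hσ).hasSum⟩

theorem tendsto_im_logZeta : Tendsto (fun σ => (logZeta σ).im) (𝓝[>] 1) atTop := by
  refine tendsto_atTop_mono' _ ?_ (tendsto_atTop_add_const_right _
    (-∑' p : Nat.Primes, (p : ℝ) ^ (-2 : ℝ)) Nat.Primes.tendsto_tsum_rpow_neg_nhdsGT_one)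
  filter_upwards [self_mem_nhdsWithin] with σ hσ
  exact tsum_rpow_neg_sub_le_im_logZeta hσ

end ZetaPiHalf

theorem zetaPiHalf_infinitely_many_turns_general (ε : ℝ) :
    ∃ φ : ℝ → ℝ, ContinuousOn φ (Set.Ioo 1 (1 + ε)) ∧
      (∀ σ ∈ Set.Ioo 1 (1 + ε),
        zetaPiHalf σ = (‖zetaPiHalf σ‖ : ℂ) * Complex.exp ((φ σ : ℂ) * Complex.I)) ∧
      Tendsto φ (nhdsWithin 1 (Set.Ioo 1 (1 + ε))) atTop := by
  refine ⟨fun σ => (ZetaPiHalf.logZeta σ).im, ?_, fun σ hσ => ?_, ?_⟩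
  · exact (continuous_im.comp_continuousOn ZetaPiHalf.continuousOn_logZeta).mono
      fun σ hσ => hσ.1
  · rw [← ZetaPiHalf.exp_logZeta hσ.1]
    exact exp_eq_norm_mul_exp_im_mul_I _
  · exact ZetaPiHalf.tendsto_im_logZeta.mono_left (nhdsWithin_mono _ Set.Ioo_subset_Ioi_self)

/-- Fix `ε > 0`. There is a continuous argument function `φ` of `ζ_{π/2}` on
`(1, 1+ε)` with `φ(σ) → +∞` as `σ → 1⁺`: the curve `σ ↦ ζ_{π/2}(σ)` makes
infinitely many turns around the origin as `σ` decreases to `1`. -/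
theorem zetaPiHalf_infinitely_many_turns (ε : ℝ) (hε : 0 < ε) :
    ∃ φ : ℝ → ℝ, ContinuousOn φ (Set.Ioo 1 (1 + ε)) ∧
      (∀ σ ∈ Set.Ioo 1 (1 + ε),
        zetaPiHalf σ = (‖zetaPiHalf σ‖ : ℂ) * Complex.exp ((φ σ : ℂ) * Complex.I)) ∧
      Tendsto φ (nhdsWithin 1 (Set.Ioo 1 (1 + ε))) atTop :=
  zetaPiHalf_infinitely_many_turns_general ε
end

section
/- There exists a real number σ_π > 1 such that for every completely multiplicative a : ℕ → ℂ with |a(p)| = 1 at all primes p, and every s ∈ ℂ with Re s > σ_π, the value S_a(s) is not a nonpositive real number (that is, it is never the case that Im S_a(s) = 0 and Re S_a(s) ≤ 0). In particular, no function equivalent to the Riemann zeta function takes negative real values on the half-plane Re s > σ_π. -/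
/-!
Take `σ_π = 2`. Since `|a(n)| = 1` for `n ≥ 1`, for `Re s > 2` the tail satisfies
`|S_a(s) - 1| ≤ ∑_{n ≥ 2} n⁻² = π²/6 - 1 < 1`, so `Re S_a(s) > 0`.
-/

open Real

lemma norm_eq_one_of_completelyMultiplicative {a : ℕ → ℂ} (h1 : a 1 = 1)
    (hmul : ∀ m n : ℕ, m ≠ 0 → n ≠ 0 → a (m * n) = a m * a n)
    (hp : ∀ p : ℕ, p.Prime → ‖a p‖ = 1) {n : ℕ} (hn : n ≠ 0) : ‖a n‖ = 1 := by
  induction n using Nat.recOnMul with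
  | zero => exact absurd rfl hn
  | one => simp [h1]
  | prime p hprime => exact hp p hprime
  | mul m k ihm ihk =>
    obtain ⟨hm, hk⟩ := mul_ne_zero_iff.mp hn
    rw [hmul m k hm hk, norm_mul, ihm hm, ihk hk, one_mul]

lemma LSeries.norm_term_le_inv_sq {f : ℕ → ℂ} (hf : ∀ n ≠ 0, ‖f n‖ ≤ 1) {s : ℂ}
    (hs : 2 ≤ s.re) (n : ℕ) : ‖term f s n‖ ≤ 1 / (n : ℝ) ^ 2 := by
  calc ‖term f s n‖ ≤ ‖term f 2 n‖ := norm_term_le_of_re_le_re f (by simpa using hs) n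
    _ ≤ 1 / (n : ℝ) ^ 2 := by
      rw [norm_term_eq]
      split_ifs with hn
      · simp
      · simpa using div_le_div_of_nonneg_right (hf n hn) (by positivity : (0 : ℝ) ≤ (n : ℝ) ^ 2)

lemma LSeries.norm_sub_le_pi_sq_div_six_sub_one {f : ℕ → ℂ} (hf : ∀ n ≠ 0, ‖f n‖ ≤ 1)
    {s : ℂ} (hs : 2 ≤ s.re) : ‖LSeries f s - f 1‖ ≤ π ^ 2 / 6 - 1 := by
  have hbound := norm_term_le_inv_sq hf hs
  have hsummable : LSeriesSummable f s :=
    Summable.of_norm_bounded hasSum_zeta_two.summable hbound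
  have htail : HasSum (Function.update (term f s) 1 0) (LSeries f s - f 1) := by
    simpa [sub_eq_neg_add] using hsummable.LSeriesHasSum.update 1 0
  have hmajorant : HasSum (Function.update (fun n : ℕ ↦ 1 / (n : ℝ) ^ 2) 1 0) (π ^ 2 / 6 - 1) := by
    simpa [sub_eq_neg_add] using hasSum_zeta_two.update 1 0
  refine htail.norm_le_of_bounded hmajorant fun n ↦ ?_
  rcases eq_or_ne n 1 with rfl | hn
  · simp
  · simpa [Function.update_of_ne hn] using hbound n

/-- There exists `σ_π > 1` such that for every completely multiplicative `a`
with `|a(p)| = 1` at all primes, and every `s` with `Re s > σ_π`, the value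
`S_a(s)` is not a nonpositive real number. -/
theorem exists_abscissa_not_nonpos_real :
    ∃ σπ : ℝ, 1 < σπ ∧
      ∀ a : ℕ → ℂ, a 1 = 1 →
        (∀ m n : ℕ, m ≠ 0 → n ≠ 0 → a (m * n) = a m * a n) →
        (∀ p : ℕ, p.Prime → ‖a p‖ = 1) →
        ∀ s : ℂ, σπ < s.re →
          ¬((LSeries a s).im = 0 ∧ (LSeries a s).re ≤ 0) := by
  refine ⟨2, one_lt_two, fun a h1 hmul hp s hs ↦ ?_⟩
  have hnorm : ∀ n ≠ 0, ‖a n‖ ≤ 1 := fun n hn ↦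
    (norm_eq_one_of_completelyMultiplicative h1 hmul hp hn).le
  have hdist := LSeries.norm_sub_le_pi_sq_div_six_sub_one hnorm hs.le
  rw [h1] at hdist
  have hre : 1 - (LSeries a s).re ≤ π ^ 2 / 6 - 1 := by
    simpa using (neg_le_abs _).trans ((Complex.abs_re_le_norm _).trans hdist)
  rintro ⟨-, hnonpos⟩
  nlinarith [pi_lt_d2, pi_pos]
end
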